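/- arXiv:1007.3652 — 7 statements merged into one kernel-verified Lean document; each statement's English description precedes it below -/
import Mathlib

section
/- Let T : X ⇉ X* be a maximal monotone operator on a Banach space X and let f_T be any representative function of T (i.e., f_T : X × X* → ℝ ∪ {+∞} is convex, lower semicontinuous, f_T(x, x*) ≥ ⟨x*, x⟩ everywhere, and f_T(x, x*) = ⟨x*, x⟩ for (x, x*) ∈ G(T)). Then f_T*(x*, x) ≥ ⟨x*, x⟩ for all (x, x*) ∈ X × X*. -/
noncomputable section

open scoped Topology Pointwise

variable {X : Type*} [NormedAddCommGroup X] [NormedSpace ℝ X]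

/-- The topological dual of a real normed space. -/
abbrev Dd (X : Type*) [NormedAddCommGroup X] [NormedSpace ℝ X] := StrongDual ℝ X

/-- Convexity for extended-real-valued functions. -/
def EConvexOn {E : Type*} [AddCommMonoid E] [Module ℝ E] (f : E → EReal) : Prop :=
  ∀ x y : E, ∀ a b : ℝ, 0 ≤ a → 0 ≤ b → a + b = 1 →
    f (a • x + b • y) ≤ (a : EReal) * f x + (b : EReal) * f y

/-- Monotonicity of a multivalued operator `T : X ⇉ X*`. -/
def IsMonotoneOp (T : X → Set (Dd X)) : Prop :=
  ∀ ⦃x y xs ys⦄, xs ∈ T x → ys ∈ T y → 0 ≤ (ys - xs) (y - x)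

/-- Maximal monotonicity of a multivalued operator `T : X ⇉ X*`. -/
def IsMaxMonotone (T : X → Set (Dd X)) : Prop :=
  IsMonotoneOp T ∧ ∀ x xs, (∀ y ys, ys ∈ T y → 0 ≤ (xs - ys) (x - y)) → xs ∈ T x

/-- Fenchel conjugate of a function on `X × X*`, evaluated on `X* × X`
(the space `X` identified with its image in `X**`). -/
def conj2 (F : X × Dd X → EReal) : Dd X × X → EReal :=
  fun p => ⨆ q : X × Dd X, ((p.1 q.1 + q.2 p.2 : ℝ) : EReal) - F q

/-- Fenchel conjugate of a function on `X`. -/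
def conj1 (f : X → EReal) : Dd X → EReal :=
  fun xs => ⨆ x : X, ((xs x : ℝ) : EReal) - f x

/-- `F` is a representative function of `T`: convex, lower semicontinuous,
everywhere above the duality product and coinciding with it on the graph of `T`. -/
def IsRepr (T : X → Set (Dd X)) (F : X × Dd X → EReal) : Prop :=
  EConvexOn F ∧ LowerSemicontinuous F ∧
  (∀ p : X × Dd X, ((p.2 p.1 : ℝ) : EReal) ≤ F p) ∧
  (∀ p : X × Dd X, p.2 ∈ T p.1 → F p = ((p.2 p.1 : ℝ) : EReal))

/-- `f̂(x, x*) = f(x, -x*)`. -/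
def hatF (F : X × Dd X → EReal) : X × Dd X → EReal := fun p => F (p.1, -p.2)

/-- Effective domain. -/
def edom {E : Type*} (F : E → EReal) : Set E := {p | F p ≠ ⊤}

/-- Infimal convolution. -/
def infConv {E : Type*} [AddCommGroup E] (g h : E → EReal) : E → EReal :=
  fun y => ⨅ u : E, g (y - u) + h u

/-- Exactness of the infimal convolution at a point. -/
def ExactAt {E : Type*} [AddCommGroup E] (g h : E → EReal) (y : E) : Prop :=
  ∃ u : E, infConv g h y = g (y - u) + h u

/-- Convex subdifferential of an extended-real-valued function (empty where the
value is not finite). -/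
def esubdiff (h : X → EReal) (x : X) : Set (Dd X) :=
  {xs | h x ≠ ⊤ ∧ h x ≠ ⊥ ∧ ∀ y, h x + ((xs (y - x) : ℝ) : EReal) ≤ h y}

/-- Reflexivity of a normed space. -/
def Reflexive' (X : Type*) [NormedAddCommGroup X] [NormedSpace ℝ X] : Prop :=
  Function.Surjective (NormedSpace.inclusionInDoubleDual ℝ X)

/-- The Fitzpatrick function of `T`. -/
def fitz (T : X → Set (Dd X)) : X × Dd X → EReal :=
  fun p => ⨆ q : {q : X × Dd X // q.2 ∈ T q.1},
    ((q.1.2 p.1 + p.2 q.1.1 - q.1.2 q.1.1 : ℝ) : EReal)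

/-!
On the graph of `T` the representative `F` equals the duality product, so restricting the
supremum defining `F*(x*, x)` to the graph gives exactly the Fitzpatrick function
`φ_T(x, x*)`. Maximality gives `φ_T ≥ ⟨x*, x⟩`: if `φ_T(x, x*) < ⟨x*, x⟩`, then
`(x, x*)` is monotonically related to every point of the graph, hence lies on it, and then
the term of `φ_T(x, x*)` at `(x, x*)` itself already equals `⟨x*, x⟩`.
-/

theorem fitz_le_conj2 (T : X → Set (Dd X)) (F : X × Dd X → EReal)
    (hF : ∀ p : X × Dd X, p.2 ∈ T p.1 → F p = ((p.2 p.1 : ℝ) : EReal)) (p : X × Dd X) :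
    fitz T p ≤ conj2 F (p.2, p.1) := by
  refine iSup_le fun ⟨q, hq⟩ => le_iSup_of_le q ?_
  rw [hF q hq, ← EReal.coe_sub]
  exact EReal.coe_le_coe_iff.mpr (le_of_eq (by dsimp only; ring))

theorem IsMaxMonotone.pairing_le_fitz {T : X → Set (Dd X)} (hT : IsMaxMonotone T)
    (p : X × Dd X) : ((p.2 p.1 : ℝ) : EReal) ≤ fitz T p := by
  obtain ⟨x, xs⟩ := p
  by_contra! hlt
  have hterm_lt : ∀ y ys, ys ∈ T y → ys x + xs y - ys y < xs x := fun y ys hy =>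
    EReal.coe_lt_coe_iff.mp <|
      (le_iSup (fun q : {q : X × Dd X // q.2 ∈ T q.1} =>
        ((q.1.2 x + xs q.1.1 - q.1.2 q.1.1 : ℝ) : EReal)) ⟨(y, ys), hy⟩).trans_lt hlt
  have hmem : xs ∈ T x := hT.2 x xs fun y ys hy => by
    have := hterm_lt y ys hy
    simp only [map_sub, sub_apply]
    linarith
  simpa using hterm_lt x xs hmem

theorem repr_conj_ge_pairing_general
    (T : X → Set (Dd X)) (hT : IsMaxMonotone T)
    (F : X × Dd X → EReal) (hF : IsRepr T F) :
    ∀ p : X × Dd X, ((p.2 p.1 : ℝ) : EReal) ≤ conj2 F (p.2, p.1) := fun p =>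
  (hT.pairing_le_fitz p).trans (fitz_le_conj2 T F hF.2.2.2 p)

/-- For a maximal monotone operator `T` on a Banach space `X` and any
representative function `F` of `T`, one has `F*(x*, x) ≥ ⟨x*, x⟩` for all `(x, x*)`. -/
theorem repr_conj_ge_pairing [CompleteSpace X]
    (T : X → Set (Dd X)) (hT : IsMaxMonotone T)
    (F : X × Dd X → EReal) (hF : IsRepr T F) :
    ∀ p : X × Dd X, ((p.2 p.1 : ℝ) : EReal) ≤ conj2 F (p.2, p.1) :=
  repr_conj_ge_pairing_general T hT F hF
end
end

section
/- Let T : X ⇉ X* be a maximal monotone operator on a reflexive Banach space X, let f_T be a representative function of T, and let (x, x*) ∈ X × X*. Then the following are equivalent: (a) (x, x*) ∈ G(T); (b) f_T(x, x*) = ⟨x*, x⟩; (c) f_T*(x*, x) = ⟨x*, x⟩. -/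
noncomputable section

open scoped Topology Pointwise

variable {X : Type*} [NormedAddCommGroup X] [NormedSpace ℝ X]

/-! Suppose `F(x, x*) = ⟨x*, x⟩`. Along the chord from `(x, x*)` to any `(y, y*)`, convexity bounds
`F` above by a linear function of the parameter, while `F ≥ c` bounds it below by the quadratic
`c`; comparing slopes at `(x, x*)` shows that `F` dominates the tangent plane
`(y, y*) ↦ ⟨x*, y⟩ + ⟨y*, x⟩ - ⟨x*, x⟩`, which is the inequality `F*(x*, x) ≤ ⟨x*, x⟩`; the reverse
inequality is Fenchel–Young. Conversely, `F*(x*, x) ≤ ⟨x*, x⟩` evaluated at the points of `G(T)`,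
where `F = c`, says that `(x, x*)` is monotonically related to `G(T)`, so maximality puts it in
`G(T)`. -/

lemma le_of_forall_mem_Ioo_add_mul_le {a b r : ℝ}
    (h : ∀ t ∈ Set.Ioo (0 : ℝ) 1, b + t * a ≤ r) : b ≤ r := by
  have hcont : Continuous fun t : ℝ => b + t * a := by fun_prop
  have hlim : Filter.Tendsto (fun t : ℝ => b + t * a) (𝓝[>] 0) (𝓝 b) := by
    simpa using (hcont.tendsto 0).mono_left nhdsWithin_le_nhds
  refine le_of_tendsto hlim ?_
  filter_upwards [Ioo_mem_nhdsGT (zero_lt_one' ℝ)] with t ht using h t ht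

section ConvexAboveCoupling

variable {F : X × Dd X → EReal} (hconv : EConvexOn F)
  (hge : ∀ p : X × Dd X, ((p.2 p.1 : ℝ) : EReal) ≤ F p)
include hconv hge

lemma coupling_convexComb_le {p q : X × Dd X} {r s : ℝ} (hp : F p = r) (hq : F q = s)
    {a b : ℝ} (ha : 0 ≤ a) (hb : 0 ≤ b) (hab : a + b = 1) :
    (a • p + b • q).2 (a • p + b • q).1 ≤ a * r + b * s := by
  have h := (hge _).trans (hconv p q a b ha hb hab)
  rw [hp, hq] at h
  exact_mod_cast h

lemma coupling_sub_le_of_eq_coupling {x : X} {xs : Dd X} (hx : F (x, xs) = ((xs x : ℝ) : EReal))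
    (y : X) (ys : Dd X) : ((xs y + ys x : ℝ) : EReal) - F (y, ys) ≤ ((xs x : ℝ) : EReal) := by
  rcases eq_or_ne (F (y, ys)) ⊤ with htop | htop
  · rw [htop, EReal.sub_top]
    exact bot_le
  have hbot : F (y, ys) ≠ ⊥ := ne_bot_of_le_ne_bot (EReal.coe_ne_bot _) (hge (y, ys))
  set s := (F (y, ys)).toReal
  have hs : F (y, ys) = s := (EReal.coe_toReal htop hbot).symm
  rw [hs, ← EReal.coe_sub, EReal.coe_le_coe_iff]
  suffices xs y + ys x - xs x ≤ s by linarith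
  refine le_of_forall_mem_Ioo_add_mul_le (a := ys y - xs y - ys x + xs x) fun t ht => ?_
  have hchord := coupling_convexComb_le hconv hge hs hx ht.1.le (sub_nonneg.2 ht.2.le)
    (add_sub_cancel t 1)
  simp only [Prod.fst_add, Prod.snd_add, Prod.smul_fst, Prod.smul_snd, map_add, map_smul,
    add_apply, FunLike.coe_smul, Pi.smul_apply, smul_eq_mul] at hchord
  -- `hchord` is `t` times the claim, up to terms of order `t²` that cancel
  have hscaled : t * (xs y + ys x - xs x + t * (ys y - xs y - ys x + xs x) - s) ≤ 0 := by
    linarith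
  linarith [nonpos_of_mul_nonpos_right hscaled ht.1]

lemma conj2_eq_coupling_of_eq_coupling {x : X} {xs : Dd X}
    (hx : F (x, xs) = ((xs x : ℝ) : EReal)) : conj2 F (xs, x) = ((xs x : ℝ) : EReal) := by
  refine le_antisymm
    (iSup_le fun q => coupling_sub_le_of_eq_coupling hconv hge hx q.1 q.2) ?_
  refine le_iSup_of_le (x, xs) ?_
  rw [hx, ← EReal.coe_sub, add_sub_cancel_right]

end ConvexAboveCoupling

lemma mem_of_conj2_le_coupling {T : X → Set (Dd X)} (hT : IsMaxMonotone T)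
    {F : X × Dd X → EReal} (hgraph : ∀ p : X × Dd X, p.2 ∈ T p.1 → F p = ((p.2 p.1 : ℝ) : EReal))
    {x : X} {xs : Dd X} (h : conj2 F (xs, x) ≤ ((xs x : ℝ) : EReal)) : xs ∈ T x := by
  refine hT.2 x xs fun y ys hy => ?_
  have hle : ((xs y + ys x : ℝ) : EReal) - F (y, ys) ≤ ((xs x : ℝ) : EReal) :=
    (le_iSup (fun q : X × Dd X => ((xs q.1 + q.2 x : ℝ) : EReal) - F q) (y, ys)).trans h
  rw [hgraph (y, ys) hy, ← EReal.coe_sub, EReal.coe_le_coe_iff] at hle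
  simp only [sub_apply, map_sub]
  linarith

theorem graph_iff_repr_eq_iff_conj_eq_general
    (T : X → Set (Dd X)) (hT : IsMaxMonotone T)
    (F : X × Dd X → EReal) (hF : IsRepr T F) (x : X) (xs : Dd X) :
    (xs ∈ T x ↔ F (x, xs) = ((xs x : ℝ) : EReal)) ∧
    (xs ∈ T x ↔ conj2 F (xs, x) = ((xs x : ℝ) : EReal)) := by
  obtain ⟨hconv, -, hge, hgraph⟩ := hF
  have hbc : F (x, xs) = ((xs x : ℝ) : EReal) → conj2 F (xs, x) = ((xs x : ℝ) : EReal) :=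
    conj2_eq_coupling_of_eq_coupling hconv hge
  have hca : conj2 F (xs, x) = ((xs x : ℝ) : EReal) → xs ∈ T x :=
    fun h => mem_of_conj2_le_coupling hT hgraph h.le
  exact ⟨⟨hgraph (x, xs), hca ∘ hbc⟩, ⟨hbc ∘ hgraph (x, xs), hca⟩⟩

/-- for a maximal monotone `T` on a reflexive Banach space with
representative function `F`: `(x,x*) ∈ G(T)` ↔ `F(x,x*) = ⟨x*,x⟩` ↔ `F*(x*,x) = ⟨x*,x⟩`. -/
theorem graph_iff_repr_eq_iff_conj_eq [CompleteSpace X] (hX : Reflexive' X)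
    (T : X → Set (Dd X)) (hT : IsMaxMonotone T)
    (F : X × Dd X → EReal) (hF : IsRepr T F) (x : X) (xs : Dd X) :
    (xs ∈ T x ↔ F (x, xs) = ((xs x : ℝ) : EReal)) ∧
    (xs ∈ T x ↔ conj2 F (xs, x) = ((xs x : ℝ) : EReal)) :=
  graph_iff_repr_eq_iff_conj_eq_general T hT F hF x xs
end
end

section
/- Let T : X ⇉ X* be a maximal monotone operator. Then the Fitzpatrick function φ_T(x, x*) = sup{⟨y*, x⟩ + ⟨x*, y⟩ − ⟨y*, y⟩ : y* ∈ Ty} is the smallest element of the Fitzpatrick family of representative functions of T: every representative function f_T satisfies f_T ≥ φ_T pointwise. -/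
noncomputable section

open scoped Topology Pointwise

variable {X : Type*} [NormedAddCommGroup X] [NormedSpace ℝ X]

open Filter in
theorem le_of_forall_one_sub_mul_add_mul_le {a b r : ℝ}
    (h : ∀ t : ℝ, 0 < t → t ≤ 1 → (1 - t) * a + t * b ≤ r) : a ≤ r := by
  have hlim : Tendsto (fun t : ℝ => (1 - t) * a + t * b) (𝓝[>] 0) (𝓝 a) := by
    have : Continuous fun t : ℝ => (1 - t) * a + t * b := by fun_prop
    simpa using (this.tendsto 0).mono_left nhdsWithin_le_nhds
  refine le_of_tendsto hlim ?_
  filter_upwards [Ioc_mem_nhdsGT one_pos] with t ht using h t ht.1 ht.2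

theorem apply_smul_add_smul (p q : X × Dd X) (a b : ℝ) :
    (a • p + b • q).2 (a • p + b • q).1 =
      a ^ 2 * p.2 p.1 + a * b * (p.2 q.1 + q.2 p.1) + b ^ 2 * q.2 q.1 := by
  simp only [Prod.fst_add, Prod.snd_add, Prod.smul_fst, Prod.smul_snd, map_add, map_smul,
    add_apply, smul_apply, smul_eq_mul]
  ring

/-- Along the segment from a point `(y, y*)` where `F` equals the duality product towards
`(x, x*)`, convexity bounds `F` from above and the duality product bounds it from below;
comparing the two to first order at `(y, y*)` gives the Fitzpatrick term. -/
theorem apply_add_apply_sub_le_of_econvexOn {F : X × Dd X → EReal} (hconv : EConvexOn F)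
    (hge : ∀ p : X × Dd X, ((p.2 p.1 : ℝ) : EReal) ≤ F p)
    {y : X} {ys : Dd X} (hy : F (y, ys) = ((ys y : ℝ) : EReal))
    {x : X} {xs : Dd X} {r : ℝ} (hr : F (x, xs) ≤ r) :
    ys x + xs y - ys y ≤ r := by
  refine le_of_forall_one_sub_mul_add_mul_le (b := xs x) fun t ht0 ht1 => ?_
  set z := (1 - t) • (y, ys) + t • (x, xs)
  have hz : ((z.2 z.1 : ℝ) : EReal) ≤ ((((1 - t) * ys y + t * r) : ℝ) : EReal) :=
    calc ((z.2 z.1 : ℝ) : EReal) ≤ F z := hge z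
      _ ≤ ((1 - t : ℝ) : EReal) * F (y, ys) + (t : EReal) * F (x, xs) :=
        hconv _ _ _ _ (by linarith) ht0.le (by ring)
      _ ≤ ((1 - t : ℝ) : EReal) * (ys y : ℝ) + (t : EReal) * r := by
        rw [hy]
        gcongr
      _ = _ := by norm_cast
  rw [EReal.coe_le_coe_iff, apply_smul_add_smul] at hz
  refine le_of_mul_le_mul_left ?_ ht0
  linear_combination hz

theorem fitzpatrick_smallest_general
    (T : X → Set (Dd X))
    (F : X × Dd X → EReal) (hF : IsRepr T F) :
    ∀ p : X × Dd X, fitz T p ≤ F p := by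
  obtain ⟨hconv, -, hge, hgraph⟩ := hF
  rintro ⟨x, xs⟩
  refine iSup_le fun ⟨⟨y, ys⟩, hy⟩ => EReal.le_of_forall_lt_iff_le.1 fun r hr => ?_
  exact_mod_cast apply_add_apply_sub_le_of_econvexOn hconv hge (hgraph _ hy) hr.le

/-- the Fitzpatrick function is the smallest representative function. -/
theorem fitzpatrick_smallest
    (T : X → Set (Dd X)) (hT : IsMaxMonotone T)
    (F : X × Dd X → EReal) (hF : IsRepr T F) :
    ∀ p : X × Dd X, fitz T p ≤ F p :=
  fitzpatrick_smallest_general T F hF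
end
end

section
/- Let X be a reflexive Banach space, S, T : X ⇉ X* maximal monotone, p ∈ X, p* ∈ X*. Suppose there exist representative functions f_S ∈ F_S and f_T ∈ F_T with dom f_S ∩ (dom f̂_T + (p, p*)) ≠ ∅ such that the function f_S* □ (f̂_T* + ⟨(p*, p), (·, ·)⟩) is lower semicontinuous at (p*, p) and exact at (p*, p). Then p* ∈ R(S(p + ·) + T(·)), i.e., there exists x ∈ X with p* ∈ S(p + x) + T(x). -/
noncomputable section

open scoped Topology Pointwise

variable {X : Type*} [NormedAddCommGroup X] [NormedSpace ℝ X]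

/-!
Write `w = (p*, p)` and `Ψ q = f̂_T (q - (p, p*))`; the second summand of the infimal convolution
is exactly `Ψ*`. A pointwise Fenchel–Moreau theorem (Hahn–Banach separation of a strict
epigraph from a box below the graph, with reflexivity identifying the duals of `X × X*` and
`X* × X`) turns lower semicontinuity at `w` into `(f_S* □ Ψ*) w ≤ (f_S + Ψ)* w`. Since
`f_S ≥ ⟨·,·⟩` and `Ψ q ≥ -⟨q - (p, p*)⟩`, the right-hand side is at most `⟨p*, p⟩`.

Exactness gives `(t, y)` with `f_S* (p* - t, p - y) + f_T* (t, -y) ≤ ⟨p* - t, p - y⟩ + ⟨t, -y⟩`.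
For a representative function `f` of a maximal monotone operator, `f*` dominates the duality
product and is convex, so both terms equal the products, and a point where `f*` touches the
product is monotonically related to the graph, hence on it: `p* - t ∈ S (p - y)` and
`t ∈ T (-y)`.
-/

namespace EReal

lemma coe_sub_le_of_coe_sub_le {a b : ℝ} {x : EReal} (h : ((a - b : ℝ) : EReal) ≤ x) :
    (a : EReal) - x ≤ b := by
  refine sub_le_of_le_add' ?_
  calc (a : EReal) = ((a - b : ℝ) : EReal) + b := by rw [← coe_add, _root_.sub_add_cancel]
    _ ≤ x + b := by gcongr

lemma eq_coe_of_add_le {x y : EReal} {a b : ℝ} (hx : (a : EReal) ≤ x) (hy : (b : EReal) ≤ y)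
    (h : x + y ≤ ((a + b : ℝ) : EReal)) : x = a := by
  have hy' : y ≠ ⊤ := fun hy' => by
    rw [hy', add_top_of_ne_bot (ne_bot_of_le_ne_bot (coe_ne_bot a) hx)] at h
    exact coe_ne_top _ (top_le_iff.1 h)
  lift y to ℝ using ⟨hy', ne_bot_of_le_ne_bot (coe_ne_bot b) hy⟩
  refine le_antisymm ?_ hx
  rw [← le_sub_iff_add_le (.inl (coe_ne_bot y)) (.inl (coe_ne_top y))] at h
  exact h.trans (by rw [← coe_sub]; exact_mod_cast (by linarith [EReal.coe_le_coe_iff.1 hy]))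

lemma add_le_of_forall_coe_lt {a b d : EReal}
    (h : ∀ a' b' : ℝ, (a' : EReal) < a → (b' : EReal) < b → ((a' + b' : ℝ) : EReal) ≤ d) :
    a + b ≤ d := by
  refine add_le_of_forall_lt fun a' ha' b' hb' => ?_
  induction a' using EReal.rec with
  | bot => simp
  | top => exact absurd ha' not_top_lt
  | coe a' =>
    induction b' using EReal.rec with
    | bot => simp
    | top => exact absurd hb' not_top_lt
    | coe b' => exact_mod_cast h a' b' ha' hb'

end EReal

section ConvexAnalysis

def strictEpigraph {E : Type*} (f : E → EReal) : Set (E × ℝ) := {yt | f yt.1 < yt.2}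

lemma EConvexOn.iSup {E ι : Type*} [AddCommMonoid E] [Module ℝ E] {f : ι → E → EReal}
    (hf : ∀ i, EConvexOn (f i)) : EConvexOn (fun x => ⨆ i, f i x) :=
  fun x y a b ha hb hab => iSup_le fun i => (hf i x y a b ha hb hab).trans (by
    gcongr <;> exact le_iSup (f · _) i)

lemma econvexOn_coe_sub {E : Type*} [AddCommMonoid E] [Module ℝ E] (ℓ : E →ₗ[ℝ] ℝ) (e : EReal) :
    EConvexOn (fun x => (ℓ x : EReal) - e) := by
  intro x y a b ha hb hab
  induction e using EReal.rec with
  | bot =>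
    simp only [EReal.coe_sub_bot]
    rcases ha.eq_or_lt with rfl | ha
    · simp [show b = 1 by linarith]
    · rw [EReal.coe_mul_top_of_pos ha, EReal.top_add_of_ne_bot]
      exact ne_bot_of_le_ne_bot EReal.zero_ne_bot (mul_nonneg (EReal.coe_nonneg.2 hb) le_top)
  | top => simp
  | coe v =>
    simp only [map_add, map_smul, smul_eq_mul, ← EReal.coe_sub, ← EReal.coe_mul, ← EReal.coe_add]
    exact EReal.coe_le_coe_iff.2 (le_of_eq (by linear_combination v * hab))

lemma EConvexOn.comp_sub_const {E : Type*} [AddCommGroup E] [Module ℝ E] {f : E → EReal}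
    (hf : EConvexOn f) (c : E) : EConvexOn (fun x => f (x - c)) := by
  intro x y a b ha hb hab
  have harg : a • x + b • y - c = a • (x - c) + b • (y - c) := by
    rw [smul_sub, smul_sub, sub_add_sub_comm, ← add_smul, hab, one_smul]
  simpa only [harg] using hf (x - c) (y - c) a b ha hb hab

lemma EConvexOn.convex_strictEpigraph {E : Type*} [AddCommGroup E] [Module ℝ E] {f : E → EReal}
    (hf : EConvexOn f) : Convex ℝ (strictEpigraph f) := by
  rintro ⟨y₁, t₁⟩ h₁ ⟨y₂, t₂⟩ h₂ a b ha hb hab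
  obtain ⟨u₁, hfu₁, hut₁⟩ := EReal.exists_between_coe_real h₁
  obtain ⟨u₂, hfu₂, hut₂⟩ := EReal.exists_between_coe_real h₂
  have hlt : a * u₁ + b * u₂ < a * t₁ + b * t₂ := by
    have h₁ : u₁ < t₁ := by exact_mod_cast hut₁
    have h₂ : u₂ < t₂ := by exact_mod_cast hut₂
    rcases ha.eq_or_lt with rfl | ha
    · simp_all
    · nlinarith [mul_le_mul_of_nonneg_left h₂.le hb]
  calc f (a • y₁ + b • y₂) ≤ (a : EReal) * f y₁ + (b : EReal) * f y₂ := hf y₁ y₂ a b ha hb hab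
    _ ≤ (a : EReal) * u₁ + (b : EReal) * u₂ := by gcongr
    _ < ((a * t₁ + b * t₂ : ℝ) : EReal) := by exact_mod_cast hlt

lemma strictEpigraph_infConv {E : Type*} [AddCommGroup E] {g k : E → EReal}
    (hg : ∀ u, g u ≠ ⊥) (hk : ∀ u, k u ≠ ⊥) :
    strictEpigraph (infConv g k) = strictEpigraph g + strictEpigraph k := by
  ext ⟨y, t⟩
  simp only [Set.mem_add, strictEpigraph, Set.mem_ofPred_eq, Prod.exists, Prod.mk_add_mk,
    Prod.mk.injEq]
  constructor
  · intro h
    obtain ⟨u, hu⟩ := iInf_lt_iff.1 h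
    have hgu : g (y - u) ≠ ⊤ := fun h' => by
      rw [h', EReal.top_add_of_ne_bot (hk u)] at hu; exact not_top_lt hu
    have hku : k u ≠ ⊤ := fun h' => by
      rw [h', EReal.add_top_of_ne_bot (hg _)] at hu; exact not_top_lt hu
    lift g (y - u) to ℝ using ⟨hgu, hg _⟩ with a ha
    lift k u to ℝ using ⟨hku, hk u⟩ with b hb
    have hab : a + b < t := by exact_mod_cast hu
    refine ⟨y - u, a + (t - a - b) / 2, ?_, u, b + (t - a - b) / 2, ?_, sub_add_cancel y u, by ring⟩
    · rw [← ha]; exact_mod_cast (by linarith)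
    · rw [← hb]; exact_mod_cast (by linarith)
  · rintro ⟨y₁, t₁, h₁, y₂, t₂, h₂, rfl, rfl⟩
    calc infConv g k (y₁ + y₂) ≤ g (y₁ + y₂ - y₂) + k y₂ := iInf_le _ y₂
      _ < ((t₁ + t₂ : ℝ) : EReal) := by rw [add_sub_cancel_right]; exact EReal.add_lt_add h₁ h₂

lemma EConvexOn.convex_strictEpigraph_infConv {E : Type*} [AddCommGroup E] [Module ℝ E]
    {g k : E → EReal} (hg : EConvexOn g) (hk : EConvexOn k) (hg' : ∀ u, g u ≠ ⊥)
    (hk' : ∀ u, k u ≠ ⊥) : Convex ℝ (strictEpigraph (infConv g k)) := by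
  rw [strictEpigraph_infConv hg' hk']
  exact hg.convex_strictEpigraph.add hk.convex_strictEpigraph

end ConvexAnalysis

section FenchelMoreau

variable {Y : Type*} [NormedAddCommGroup Y] [NormedSpace ℝ Y]

def IsAffineMinorant (f : Y → EReal) (φ : Y →L[ℝ] ℝ) (r : ℝ) : Prop :=
  ∀ y, ((φ y + r : ℝ) : EReal) ≤ f y

lemma exists_separation_strictEpigraph {f : Y → EReal} {y₀ : Y} {c : ℝ}
    (hconv : Convex ℝ (strictEpigraph f)) (hlsc : LowerSemicontinuousAt f y₀)
    (hc : (c : EReal) < f y₀) :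
    ∃ (ψ : Y →L[ℝ] ℝ) (s α : ℝ), 0 ≤ s ∧ (∀ y (t : ℝ), f y < t → α ≤ ψ y + s * t) ∧
      ∀ t < c, ψ y₀ + s * t < α := by
  obtain ⟨ε, hε, hball⟩ := Metric.eventually_nhds_iff.mp (hlsc c hc)
  have hdisj : Disjoint (Metric.ball y₀ ε ×ˢ Set.Iio c) (strictEpigraph f) := by
    refine Set.disjoint_left.2 fun ⟨y, t⟩ ⟨hy, ht⟩ hyt => ?_
    exact (hball hy).not_gt (lt_trans hyt (EReal.coe_lt_coe_iff.2 ht))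
  obtain ⟨Φ, α, hU, hepi⟩ := geometric_hahn_banach_open ((convex_ball y₀ ε).prod (convex_Iio c))
    (Metric.isOpen_ball.prod isOpen_Iio) hconv hdisj
  have hΦ (y : Y) (t : ℝ) : Φ (y, t) = Φ.comp (.inl ℝ Y ℝ) y + Φ (0, 1) * t := by
    rw [← Φ.comp_inl_add_comp_inr, mul_comm, ← smul_eq_mul, ← map_smul]
    simp
  have hy₀ : ∀ t < c, Φ.comp (.inl ℝ Y ℝ) y₀ + Φ (0, 1) * t < α := fun t ht => by
    rw [← hΦ]; exact hU _ ⟨Metric.mem_ball_self hε, ht⟩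
  refine ⟨Φ.comp (.inl ℝ Y ℝ), Φ (0, 1), α, ?_, fun y t h => hΦ y t ▸ hepi (y, t) h, hy₀⟩
  -- a negative vertical component would make `Φ (y₀, t)` unbounded as `t → -∞`
  by_contra! hs
  set t := min (c - 1) ((α - Φ.comp (.inl ℝ Y ℝ) y₀) / Φ (0, 1))
  have h₁ := hy₀ t (by simp [t])
  have h₂ : α - Φ.comp (.inl ℝ Y ℝ) y₀ ≤ Φ (0, 1) * t := by
    rw [mul_comm]; exact (le_div_iff_of_neg hs).1 (min_le_right _ _)
  linarith

lemma exists_isAffineMinorant_of_separation {f : Y → EReal} {ψ : Y →L[ℝ] ℝ} {s α c : ℝ} {y₀ : Y}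
    (hs : 0 < s) (hepi : ∀ y (t : ℝ), f y < t → α ≤ ψ y + s * t)
    (hy₀ : ∀ t < c, ψ y₀ + s * t < α) :
    ∃ φ r, IsAffineMinorant f φ r ∧ c ≤ φ y₀ + r := by
  have hφ (y : Y) : (-s⁻¹ • ψ) y + α / s = (α - ψ y) / s := by
    simp only [smul_apply, smul_eq_mul]; field_simp; ring
  refine ⟨-s⁻¹ • ψ, α / s, fun y => ?_, ?_⟩
  · refine EReal.le_of_forall_lt_iff_le.1 fun t ht => ?_
    have := hepi y t ht
    rw [hφ, EReal.coe_le_coe_iff, div_le_iff₀ hs]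
    linarith
  · refine hφ y₀ ▸ le_of_forall_lt fun t ht => ?_
    have := hy₀ t ht
    rw [lt_div_iff₀ hs]
    linarith

lemma exists_isAffineMinorant_of_vertical_separation {f : Y → EReal} {ψ φ₀ : Y →L[ℝ] ℝ}
    {α c r₀ : ℝ} {y₀ : Y} (hepi : ∀ y (t : ℝ), f y < t → α ≤ ψ y) (hy₀ : ψ y₀ < α)
    (hmin : IsAffineMinorant f φ₀ r₀) :
    ∃ φ r, IsAffineMinorant f φ r ∧ c ≤ φ y₀ + r := by
  -- tilt the minorant `φ₀ + r₀` by a large multiple of `α - ψ`, which is `≤ 0` on the domain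
  set l := max 0 ((c - (φ₀ y₀ + r₀)) / (α - ψ y₀))
  have hl : 0 ≤ l := le_max_left _ _
  have hφ (y : Y) : (φ₀ - l • ψ) y + (r₀ + l * α) = φ₀ y + r₀ + l * (α - ψ y) := by
    simp only [sub_apply, smul_apply, smul_eq_mul]; ring
  refine ⟨φ₀ - l • ψ, r₀ + l * α, fun y => ?_, ?_⟩
  · obtain hy | hy := eq_or_lt_of_le (le_top : f y ≤ ⊤)
    · simp [hy]
    obtain ⟨t, ht, -⟩ := EReal.exists_between_coe_real hy
    have := mul_le_mul_of_nonneg_left (sub_nonpos.2 (hepi y t ht)) hl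
    refine le_trans ?_ (hmin y)
    rw [hφ]
    exact_mod_cast (by linarith)
  · have := (div_le_iff₀ (sub_pos.2 hy₀)).1 (le_max_right 0 ((c - (φ₀ y₀ + r₀)) / (α - ψ y₀)))
    rw [hφ]
    linarith

theorem exists_isAffineMinorant_ge {f : Y → EReal} {y₀ : Y} {c : ℝ}
    (hconv : Convex ℝ (strictEpigraph f)) (hlsc : LowerSemicontinuousAt f y₀)
    (hmin : ∃ φ r, IsAffineMinorant f φ r) (hc : (c : EReal) < f y₀) :
    ∃ φ r, IsAffineMinorant f φ r ∧ c ≤ φ y₀ + r := by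
  obtain ⟨ψ, s, α, hs, hepi, hy₀⟩ := exists_separation_strictEpigraph hconv hlsc hc
  obtain rfl | hs := hs.eq_or_lt
  · obtain ⟨φ₀, r₀, hφ₀⟩ := hmin
    simp only [zero_mul, add_zero] at hepi hy₀
    exact exists_isAffineMinorant_of_vertical_separation hepi (hy₀ (c - 1) (by linarith)) hφ₀
  · exact exists_isAffineMinorant_of_separation hs hepi hy₀

theorem exists_isAffineMinorant {f : Y → EReal} {y₀ : Y}
    (hconv : Convex ℝ (strictEpigraph f)) (hlsc : LowerSemicontinuousAt f y₀)
    (htop : f y₀ ≠ ⊤) (hbot : f y₀ ≠ ⊥) : ∃ φ r, IsAffineMinorant f φ r := by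
  lift f y₀ to ℝ using ⟨htop, hbot⟩ with v hv
  obtain ⟨ψ, s, α, hs, hepi, hy₀⟩ :=
    exists_separation_strictEpigraph hconv hlsc (hv ▸ EReal.coe_lt_coe_iff.2 (sub_one_lt v))
  obtain rfl | hs := hs.eq_or_lt
  · -- a vertical hyperplane cannot separate a point of the domain from the epigraph
    have h₁ := hepi y₀ (v + 1) (by rw [← hv]; exact_mod_cast lt_add_one v)
    have h₂ := hy₀ (v - 2) (by linarith)
    simp only [zero_mul, add_zero] at h₁ h₂
    exact absurd h₁ h₂.not_ge
  · obtain ⟨φ, r, hφ, -⟩ := exists_isAffineMinorant_of_separation hs hepi hy₀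
    exact ⟨φ, r, hφ⟩

end FenchelMoreau

section Conjugate

def dualPair (z : X × Dd X) (u : Dd X × X) : ℝ := u.1 z.1 + z.2 u.2

def dualPairL (z : X × Dd X) : (Dd X × X) →L[ℝ] ℝ :=
  (NormedSpace.inclusionInDoubleDual ℝ X z.1).comp (.fst ℝ (Dd X) X) + z.2.comp (.snd ℝ (Dd X) X)

def dualPairR (u : Dd X × X) : (X × Dd X) →L[ℝ] ℝ :=
  u.1.comp (.fst ℝ X (Dd X)) + (NormedSpace.inclusionInDoubleDual ℝ X u.2).comp (.snd ℝ X (Dd X))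

@[simp] lemma dualPairL_apply (z : X × Dd X) (u : Dd X × X) : dualPairL z u = dualPair z u := rfl

lemma dualPair_add_right (z : X × Dd X) (u v : Dd X × X) :
    dualPair z (u + v) = dualPair z u + dualPair z v := map_add (dualPairL z) u v

lemma dualPair_add_left (z w : X × Dd X) (u : Dd X × X) :
    dualPair (z + w) u = dualPair z u + dualPair w u := map_add (dualPairR u) z w

lemma Reflexive'.dualPairL_surjective (hX : Reflexive' X) :
    Function.Surjective (dualPairL (X := X)) := by
  intro φ
  obtain ⟨x, hx⟩ := hX (φ.comp (.inl ℝ (Dd X) X))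
  refine ⟨(x, φ.comp (.inr ℝ (Dd X) X)), ContinuousLinearMap.ext fun u => ?_⟩
  rw [← φ.comp_inl_add_comp_inr, ← hx]
  rfl

lemma Reflexive'.dualPairR_surjective (hX : Reflexive' X) :
    Function.Surjective (dualPairR (X := X)) := by
  intro φ
  obtain ⟨x, hx⟩ := hX (φ.comp (.inr ℝ X (Dd X)))
  refine ⟨(φ.comp (.inl ℝ X (Dd X)), x), ContinuousLinearMap.ext fun z => ?_⟩
  rw [← φ.comp_inl_add_comp_inr, ← hx]
  rfl

lemma dualPair_sub_le_conj2 (F : X × Dd X → EReal) (u : Dd X × X) (q : X × Dd X) :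
    (dualPair q u : EReal) - F q ≤ conj2 F u :=
  le_iSup (fun q => (dualPair q u : EReal) - F q) q

lemma conj2_le_of_isAffineMinorant {F : X × Dd X → EReal} {u : Dd X × X} {r : ℝ}
    (h : IsAffineMinorant F (dualPairR u) r) : conj2 F u ≤ ((-r : ℝ) : EReal) :=
  iSup_le fun q => EReal.coe_sub_le_of_coe_sub_le (by rw [sub_neg_eq_add]; exact h q)

lemma conj2_ne_bot {F : X × Dd X → EReal} {q : X × Dd X} (hq : F q ≠ ⊤) (u : Dd X × X) :
    conj2 F u ≠ ⊥ :=
  ne_bot_of_le_ne_bot (by simpa [sub_eq_add_neg, EReal.add_eq_bot_iff] using hq)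
    (dualPair_sub_le_conj2 F u q)

lemma econvexOn_conj2 (F : X × Dd X → EReal) : EConvexOn (conj2 F) :=
  EConvexOn.iSup fun q => econvexOn_coe_sub (dualPairL q : (Dd X × X) →ₗ[ℝ] ℝ) (F q)

lemma EConvexOn.hatF {F : X × Dd X → EReal} (hF : EConvexOn F) : EConvexOn (hatF F) := by
  intro x y a b ha hb hab
  have harg : ((a • x + b • y).1, -(a • x + b • y).2) = a • (x.1, -x.2) + b • (y.1, -y.2) := by
    ext <;> simp; ring
  show F _ ≤ _
  rw [harg]
  exact hF (x.1, -x.2) (y.1, -y.2) a b ha hb hab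

lemma conj2_hatF (F : X × Dd X → EReal) (u : Dd X × X) :
    conj2 (hatF F) u = conj2 F (u.1, -u.2) :=
  ((Equiv.refl X).prodCongr (Equiv.neg (Dd X))).iSup_congr fun q => by
    simp [hatF]; rfl

lemma conj2_comp_sub_const (G : X × Dd X → EReal) (c : X × Dd X) (u : Dd X × X) :
    conj2 (fun q => G (q - c)) u = conj2 G u + dualPair c u := by
  have hshift (q : X × Dd X) :
      (dualPair (q + c) u : EReal) - G q = ((dualPair q u : EReal) - G q) + dualPair c u := by
    rw [dualPair_add_left, EReal.coe_add, sub_eq_add_neg, sub_eq_add_neg, add_right_comm]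
  calc conj2 (fun q => G (q - c)) u = ⨆ q, (dualPair (q + c) u : EReal) - G q :=
        ((Equiv.addRight c).iSup_congr fun q => by
          simp only [Equiv.coe_addRight, add_sub_cancel_right]; rfl).symm
    _ = conj2 G u + dualPair c u := by
        simp only [hshift]
        refine le_antisymm (iSup_le fun q => add_le_add_left (dualPair_sub_le_conj2 G u q) _) ?_
        refine EReal.add_le_of_le_sub (iSup_le fun q => ?_)
        rw [EReal.le_sub_iff_add_le (.inl (EReal.coe_ne_bot _)) (.inl (EReal.coe_ne_top _))]
        exact le_iSup_of_le q le_rfl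

lemma conj2_hatF_comp_sub (F : X × Dd X → EReal) (c : X × Dd X) (u : Dd X × X) :
    conj2 (fun q => hatF F (q - c)) u = conj2 F (u.1, -u.2) + dualPair c u := by
  rw [conj2_comp_sub_const, conj2_hatF]

lemma LowerSemicontinuous.hatF_comp_sub {F : X × Dd X → EReal} (hF : LowerSemicontinuous F)
    (c : X × Dd X) : LowerSemicontinuous (fun q => hatF F (q - c)) :=
  hF.comp (g := fun q => ((q - c).1, -(q - c).2)) (by fun_prop)

lemma isAffineMinorant_infConv_conj2 {F G : X × Dd X → EReal} {q₀ : X × Dd X} {a b : ℝ}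
    (hF : F q₀ = a) (hG : G q₀ = b) :
    IsAffineMinorant (infConv (conj2 F) (conj2 G)) (dualPairL q₀) (-(a + b)) := fun u =>
  le_iInf fun v => by
    have hF' := dualPair_sub_le_conj2 F (u - v) q₀
    have hG' := dualPair_sub_le_conj2 G v q₀
    rw [hF, ← EReal.coe_sub] at hF'
    rw [hG, ← EReal.coe_sub] at hG'
    have hsplit := dualPair_add_right q₀ (u - v) v
    rw [sub_add_cancel] at hsplit
    calc ((dualPairL q₀ u + -(a + b) : ℝ) : EReal)
        = ((dualPair q₀ (u - v) - a : ℝ) : EReal) + ((dualPair q₀ v - b : ℝ) : EReal) := by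
          rw [← EReal.coe_add, dualPairL_apply, hsplit]; ring_nf
      _ ≤ conj2 F (u - v) + conj2 G v := add_le_add hF' hG'

end Conjugate

section Duality

variable {F G : X × Dd X → EReal}

lemma exists_conj2_le_of_lt (hX : Reflexive' X) {z : X × Dd X} {c : ℝ} (hconv : EConvexOn F)
    (hlsc : LowerSemicontinuousAt F z) (hmin : ∃ φ r, IsAffineMinorant F φ r)
    (hc : (c : EReal) < F z) : ∃ u r, conj2 F u ≤ ((-r : ℝ) : EReal) ∧ c ≤ dualPair z u + r := by
  obtain ⟨φ, r, hφ, hcφ⟩ := exists_isAffineMinorant_ge hconv.convex_strictEpigraph hlsc hmin hc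
  obtain ⟨u, rfl⟩ := hX.dualPairR_surjective φ
  exact ⟨u, r, conj2_le_of_isAffineMinorant hφ, hcφ⟩

lemma add_le_of_isAffineMinorant_infConv_conj2 (hX : Reflexive' X) {z : X × Dd X} {r : ℝ}
    (hFc : EConvexOn F) (hFl : LowerSemicontinuousAt F z) (hFm : ∃ φ r, IsAffineMinorant F φ r)
    (hGc : EConvexOn G) (hGl : LowerSemicontinuousAt G z) (hGm : ∃ φ r, IsAffineMinorant G φ r)
    (h : IsAffineMinorant (infConv (conj2 F) (conj2 G)) (dualPairL z) r) :
    F z + G z ≤ ((-r : ℝ) : EReal) := by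
  refine EReal.add_le_of_forall_coe_lt fun c₁ c₂ h₁ h₂ => ?_
  obtain ⟨u₁, r₁, hu₁, hc₁⟩ := exists_conj2_le_of_lt hX hFc hFl hFm h₁
  obtain ⟨u₂, r₂, hu₂, hc₂⟩ := exists_conj2_le_of_lt hX hGc hGl hGm h₂
  have hinf : ((dualPair z (u₁ + u₂) + r : ℝ) : EReal) ≤ ((-r₁ + -r₂ : ℝ) : EReal) :=
    calc _ ≤ infConv (conj2 F) (conj2 G) (u₁ + u₂) := h _
      _ ≤ conj2 F (u₁ + u₂ - u₂) + conj2 G u₂ := iInf_le _ u₂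
      _ = conj2 F u₁ + conj2 G u₂ := by rw [add_sub_cancel_right]
      _ ≤ _ := by rw [EReal.coe_add]; exact add_le_add hu₁ hu₂
  rw [dualPair_add_right] at hinf
  exact_mod_cast (by linarith [EReal.coe_le_coe_iff.1 hinf])

theorem infConv_conj2_le_conj2_add (hX : Reflexive' X) {q₀ : X × Dd X} {w : Dd X × X}
    (hFc : EConvexOn F) (hFl : LowerSemicontinuous F) (hFb : ∀ q, F q ≠ ⊥) (hF₀ : F q₀ ≠ ⊤)
    (hGc : EConvexOn G) (hGl : LowerSemicontinuous G) (hGb : ∀ q, G q ≠ ⊥) (hG₀ : G q₀ ≠ ⊤)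
    (hw : LowerSemicontinuousAt (infConv (conj2 F) (conj2 G)) w) :
    infConv (conj2 F) (conj2 G) w ≤ conj2 (F + G) w := by
  have hFm := exists_isAffineMinorant hFc.convex_strictEpigraph (hFl q₀) hF₀ (hFb q₀)
  have hGm := exists_isAffineMinorant hGc.convex_strictEpigraph (hGl q₀) hG₀ (hGb q₀)
  have hconv := (econvexOn_conj2 F).convex_strictEpigraph_infConv (econvexOn_conj2 G)
    (conj2_ne_bot hF₀) (conj2_ne_bot hG₀)
  obtain ⟨a, ha⟩ : ∃ a : ℝ, F q₀ = a := ⟨_, (EReal.coe_toReal hF₀ (hFb q₀)).symm⟩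
  obtain ⟨b, hb⟩ : ∃ b : ℝ, G q₀ = b := ⟨_, (EReal.coe_toReal hG₀ (hGb q₀)).symm⟩
  refine EReal.ge_of_forall_gt_iff_ge.1 fun c hc => ?_
  obtain ⟨φ, r, hφ, hcφ⟩ :=
    exists_isAffineMinorant_ge hconv hw ⟨_, _, isAffineMinorant_infConv_conj2 ha hb⟩ hc
  obtain ⟨z, rfl⟩ := hX.dualPairL_surjective φ
  have hz := add_le_of_isAffineMinorant_infConv_conj2 hX hFc (hFl z) hFm hGc (hGl z) hGm hφ
  calc (c : EReal) ≤ ((dualPair z w + r : ℝ) : EReal) := by exact_mod_cast hcφ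
    _ = (dualPair z w : EReal) - ((-r : ℝ) : EReal) := by rw [← EReal.coe_sub, sub_neg_eq_add]
    _ ≤ (dualPair z w : EReal) - (F z + G z) := EReal.sub_le_sub le_rfl hz
    _ ≤ conj2 (F + G) w := dualPair_sub_le_conj2 (F + G) w z

lemma conj2_add_le_of_coupling_le {F G : X × Dd X → EReal} {p : X} {ps : Dd X}
    (hF : ∀ q : X × Dd X, ((q.2 q.1 : ℝ) : EReal) ≤ F q)
    (hG : ∀ q : X × Dd X, ((-((q.2 - ps) (q.1 - p)) : ℝ) : EReal) ≤ G q) :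
    conj2 (F + G) (ps, p) ≤ ((ps p : ℝ) : EReal) :=
  iSup_le fun q => EReal.coe_sub_le_of_coe_sub_le <|
    calc ((dualPair q (ps, p) - ps p : ℝ) : EReal)
        = ((q.2 q.1 : ℝ) : EReal) + ((-((q.2 - ps) (q.1 - p)) : ℝ) : EReal) := by
          rw [← EReal.coe_add]; congr 1; simp only [dualPair, sub_apply, map_sub]; ring
      _ ≤ F q + G q := add_le_add (hF q) (hG q)

end Duality

lemma EConvexOn.sub_apply_sub_nonneg {G : Dd X × X → EReal} (hG : EConvexOn G)
    (hle : ∀ u, ((u.1 u.2 : ℝ) : EReal) ≤ G u) {u v : Dd X × X} (hu : G u = u.1 u.2)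
    (hv : G v = v.1 v.2) : 0 ≤ (u.1 - v.1) (u.2 - v.2) := by
  have h := (hle _).trans (hG u v (1 / 2) (1 / 2) (by norm_num) (by norm_num) (by norm_num))
  rw [hu, hv, ← EReal.coe_mul, ← EReal.coe_mul, ← EReal.coe_add, EReal.coe_le_coe_iff] at h
  simp only [Prod.fst_add, Prod.snd_add, Prod.smul_fst, Prod.smul_snd, map_add, map_smul,
    add_apply, smul_apply, smul_eq_mul] at h
  simp only [sub_apply, map_sub]
  linarith

section Representative

variable {T : X → Set (Dd X)} {F : X × Dd X → EReal}

lemma IsRepr.ne_bot (hF : IsRepr T F) (q : X × Dd X) : F q ≠ ⊥ :=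
  ne_bot_of_le_ne_bot (EReal.coe_ne_bot _) (hF.2.2.1 q)

lemma IsRepr.coupling_le_conj2 (hT : IsMaxMonotone T) (hF : IsRepr T F) (ys : Dd X) (y : X) :
    ((ys y : ℝ) : EReal) ≤ conj2 F (ys, y) := by
  have hgraph {a : X} {as : Dd X} (has : as ∈ T a) :
      ((ys a + as y - as a : ℝ) : EReal) ≤ conj2 F (ys, y) := by
    have := dualPair_sub_le_conj2 F (ys, y) (a, as)
    rwa [hF.2.2.2 (a, as) has, ← EReal.coe_sub] at this
  by_contra! hlt
  have hmem : ys ∈ T y := hT.2 y ys fun a as has => by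
    have := EReal.coe_lt_coe_iff.1 ((hgraph has).trans_lt hlt)
    simp only [sub_apply, map_sub]
    linarith
  exact (hgraph hmem).not_gt (by simpa using hlt)

lemma le_fitz {a : X} {as : Dd X} (has : as ∈ T a) (q : X × Dd X) :
    ((as q.1 + q.2 a - as a : ℝ) : EReal) ≤ fitz T q :=
  le_iSup (fun g : {g : X × Dd X // g.2 ∈ T g.1} =>
    ((g.1.2 q.1 + q.2 g.1.1 - g.1.2 g.1.1 : ℝ) : EReal)) ⟨(a, as), has⟩

lemma IsRepr.fitz_le (hF : IsRepr T F) (q : X × Dd X) : fitz T q ≤ F q := by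
  refine iSup_le fun ⟨⟨a, as⟩, has⟩ => ?_
  obtain hq | hq := eq_or_ne (F q) ⊤
  · simp [hq]
  lift F q to ℝ using ⟨hq, hF.ne_bot q⟩ with v hv
  -- on the segment from `(a, as)` to `q`, convexity and `F ≥ coupling` give the bound up to an
  -- error `t * (q.2 - as) (q.1 - a)` that vanishes as `t → 0`
  have hseg : ∀ t ∈ Set.Ioo (0 : ℝ) 1,
      as q.1 + q.2 a - as a + t * (q.2 - as) (q.1 - a) ≤ v := by
    rintro t ⟨ht0, ht1⟩
    have h := (hF.2.2.1 _).trans (hF.1 (a, as) q (1 - t) t (by linarith) ht0.le (by ring))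
    rw [hF.2.2.2 (a, as) has, ← hv, ← EReal.coe_mul, ← EReal.coe_mul, ← EReal.coe_add,
      EReal.coe_le_coe_iff] at h
    simp only [Prod.fst_add, Prod.snd_add, Prod.smul_fst, Prod.smul_snd, map_add, map_smul,
      add_apply, smul_apply, smul_eq_mul] at h
    simp only [sub_apply, map_sub]
    nlinarith
  have hlim : Filter.Tendsto (fun t : ℝ => as q.1 + q.2 a - as a + t * (q.2 - as) (q.1 - a))
      (𝓝[>] 0) (𝓝 (as q.1 + q.2 a - as a)) :=
    ((continuous_const.add (continuous_id.mul continuous_const)).tendsto' 0 _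
      (by simp)).mono_left nhdsWithin_le_nhds
  exact_mod_cast le_of_tendsto hlim (Filter.eventually_of_mem (Ioo_mem_nhdsGT one_pos) hseg)

lemma IsRepr.conj2_le_of_mem (hF : IsRepr T F) {a : X} {as : Dd X} (has : as ∈ T a) :
    conj2 F (as, a) ≤ ((as a : ℝ) : EReal) :=
  iSup_le fun q => EReal.coe_sub_le_of_coe_sub_le ((le_fitz has q).trans (hF.fitz_le q))

lemma IsRepr.mem_of_conj2_le (hT : IsMaxMonotone T) (hF : IsRepr T F) {ys : Dd X} {y : X}
    (h : conj2 F (ys, y) ≤ ((ys y : ℝ) : EReal)) : ys ∈ T y :=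
  hT.2 y ys fun a as has =>
    (econvexOn_conj2 F).sub_apply_sub_nonneg (fun u => hF.coupling_le_conj2 hT u.1 u.2)
      (h.antisymm (hF.coupling_le_conj2 hT ys y))
      ((hF.conj2_le_of_mem has).antisymm (hF.coupling_le_conj2 hT as a))

lemma IsRepr.neg_coupling_le_hatF_comp_sub (hF : IsRepr T F) (c q : X × Dd X) :
    ((-((q.2 - c.2) (q.1 - c.1)) : ℝ) : EReal) ≤ hatF F (q - c) := by
  simpa [hatF] using hF.2.2.1 ((q - c).1, -(q - c).2)

lemma IsRepr.mem_of_conj2_add_le {S : X → Set (Dd X)} {FS : X × Dd X → EReal}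
    (hS : IsMaxMonotone S) (hFS : IsRepr S FS) (hT : IsMaxMonotone T) (hF : IsRepr T F)
    {xs ys : Dd X} {x y : X}
    (h : conj2 FS (xs, x) + conj2 F (ys, y) ≤ ((xs x + ys y : ℝ) : EReal)) :
    xs ∈ S x ∧ ys ∈ T y := by
  have hS_ge := hFS.coupling_le_conj2 hS xs x
  have hT_ge := hF.coupling_le_conj2 hT ys y
  refine ⟨hFS.mem_of_conj2_le hS (EReal.eq_coe_of_add_le hS_ge hT_ge h).le,
    hF.mem_of_conj2_le hT (EReal.eq_coe_of_add_le hT_ge hS_ge ?_).le⟩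
  rwa [add_comm, add_comm (ys y)]

end Representative

theorem range_translate_of_infConv_lsc_exact_general (hX : Reflexive' X)
    (S T : X → Set (Dd X)) (hS : IsMaxMonotone S) (hT : IsMaxMonotone T)
    (p : X) (ps : Dd X)
    (FS FT : X × Dd X → EReal) (hFS : IsRepr S FS) (hFT : IsRepr T FT)
    (hdom : ∃ q : X × Dd X, q ∈ edom FS ∧ q - (p, ps) ∈ edom (hatF FT))
    (hlsc : LowerSemicontinuousAt
      (infConv (conj2 FS)
        (fun u : Dd X × X => conj2 (hatF FT) u + ((ps u.2 + u.1 p : ℝ) : EReal))) (ps, p))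
    (hex : ExactAt (conj2 FS)
      (fun u : Dd X × X => conj2 (hatF FT) u + ((ps u.2 + u.1 p : ℝ) : EReal)) (ps, p)) :
    ∃ x : X, ∃ s ∈ S (p + x), ∃ t ∈ T x, s + t = ps := by
  obtain ⟨q₀, hq₀S, hq₀T⟩ := hdom
  set Ψ : X × Dd X → EReal := fun q => hatF FT (q - (p, ps))
  have hk : (fun u : Dd X × X => conj2 (hatF FT) u + ((ps u.2 + u.1 p : ℝ) : EReal)) =
      conj2 Ψ := by
    funext u; rw [conj2_hatF_comp_sub, conj2_hatF, dualPair, add_comm (u.1 p)]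
  rw [hk] at hlsc hex
  have hΨ_ge := hFT.neg_coupling_le_hatF_comp_sub (p, ps)
  have hdual : infConv (conj2 FS) (conj2 Ψ) (ps, p) ≤ ((ps p : ℝ) : EReal) :=
    (infConv_conj2_le_conj2_add hX hFS.1 hFS.2.1 hFS.ne_bot hq₀S (hFT.1.hatF.comp_sub_const _)
      (hFT.2.1.hatF_comp_sub _) (fun q => ne_bot_of_le_ne_bot (EReal.coe_ne_bot _) (hΨ_ge q))
      hq₀T hlsc).trans (conj2_add_le_of_coupling_le hFS.2.2.1 hΨ_ge)
  obtain ⟨⟨t, y⟩, hu⟩ := hex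
  have hsum : conj2 FS (ps - t, p - y) + conj2 FT (t, -y) ≤
      (((ps - t) (p - y) + t (-y) : ℝ) : EReal) := by
    rw [hu, conj2_hatF_comp_sub, ← add_assoc, Prod.mk_sub_mk, ← EReal.le_sub_iff_add_le
      (.inl (EReal.coe_ne_bot _)) (.inl (EReal.coe_ne_top _)), ← EReal.coe_sub] at hdual
    convert hdual using 2
    rw [dualPair]
    simp only [sub_apply, map_sub, map_neg]
    ring
  obtain ⟨hSmem, hTmem⟩ := hFS.mem_of_conj2_add_le hS hT hFT hsum
  exact ⟨-y, ps - t, by rwa [← sub_eq_add_neg], t, hTmem, sub_add_cancel ps t⟩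

/-- sufficient condition (iii) ⇒ (i) of Theorem 3. -/
theorem range_translate_of_infConv_lsc_exact [CompleteSpace X] (hX : Reflexive' X)
    (S T : X → Set (Dd X)) (hS : IsMaxMonotone S) (hT : IsMaxMonotone T)
    (p : X) (ps : Dd X)
    (FS FT : X × Dd X → EReal) (hFS : IsRepr S FS) (hFT : IsRepr T FT)
    (hdom : ∃ q : X × Dd X, q ∈ edom FS ∧ q - (p, ps) ∈ edom (hatF FT))
    (hlsc : LowerSemicontinuousAt
      (infConv (conj2 FS)
        (fun u : Dd X × X => conj2 (hatF FT) u + ((ps u.2 + u.1 p : ℝ) : EReal))) (ps, p))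
    (hex : ExactAt (conj2 FS)
      (fun u : Dd X × X => conj2 (hatF FT) u + ((ps u.2 + u.1 p : ℝ) : EReal)) (ps, p)) :
    ∃ x : X, ∃ s ∈ S (p + x), ∃ t ∈ T x, s + t = ps :=
  range_translate_of_infConv_lsc_exact_general hX S T hS hT p ps FS FT hFS hFT hdom hlsc hex
end
end

section
/- Let X be a reflexive Banach space and S, T : X ⇉ X* maximal monotone, p ∈ X, p* ∈ X*, and f_S ∈ F_S, f_T ∈ F_T representative functions. Then (f_S + f̂_T(· − p, · − p*))*(p*, p) ≤ ⟨p*, p⟩. -/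
/-!
Both representative functions dominate the duality pairing, and for every `(x, x*)`
`⟨p*, x⟩ + ⟨x*, p⟩ - ⟨p*, p⟩ = ⟨x*, x⟩ + ⟨p* - x*, x - p⟩ ≤ f_S(x, x*) + f̂_T(x - p, x* - p*)`,
so every term of the supremum defining the conjugate at `(p*, p)` is at most `⟨p*, p⟩`.
-/

noncomputable section

open scoped Topology Pointwise

variable {X : Type*} [NormedAddCommGroup X] [NormedSpace ℝ X]

theorem conj2_le_of_forall_le {F : X × Dd X → EReal} {r : Dd X × X} {c : ℝ}
    (h : ∀ q : X × Dd X, ((r.1 q.1 + q.2 r.2 - c : ℝ) : EReal) ≤ F q) :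
    conj2 F r ≤ c :=
  iSup_le fun q => EReal.sub_le_of_le_add' <| by
    simpa only [← EReal.coe_add, sub_add_cancel] using add_le_add (h q) (le_refl (c : EReal))

theorem pairing_le_hatF_shift {F : X × Dd X → EReal}
    (hF : ∀ q : X × Dd X, ((q.2 q.1 : ℝ) : EReal) ≤ F q) (p : X) (ps : Dd X) (q : X × Dd X) :
    (((ps - q.2) (q.1 - p) : ℝ) : EReal) ≤ hatF F (q.1 - p, q.2 - ps) := by
  simpa only [hatF, neg_sub] using hF (q.1 - p, ps - q.2)

theorem conj_sum_le_pairing_general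
    (S T : X → Set (Dd X))
    (p : X) (ps : Dd X)
    (FS FT : X × Dd X → EReal) (hFS : IsRepr S FS) (hFT : IsRepr T FT) :
    conj2 (fun q : X × Dd X => FS q + hatF FT (q.1 - p, q.2 - ps)) (ps, p)
      ≤ ((ps p : ℝ) : EReal) := by
  refine conj2_le_of_forall_le fun q => ?_
  have hshift : ps q.1 + q.2 p - ps p = q.2 q.1 + (ps - q.2) (q.1 - p) := by
    simp only [sub_apply, map_sub]
    ring
  rw [hshift, EReal.coe_add]
  exact add_le_add (hFS.2.2.1 q) (pairing_le_hatF_shift hFT.2.2.1 p ps q)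

/-- `(f_S + f̂_T(· − p, · − p*))*(p*, p) ≤ ⟨p*, p⟩`. -/
theorem conj_sum_le_pairing [CompleteSpace X] (hX : Reflexive' X)
    (S T : X → Set (Dd X)) (hS : IsMaxMonotone S) (hT : IsMaxMonotone T)
    (p : X) (ps : Dd X)
    (FS FT : X × Dd X → EReal) (hFS : IsRepr S FS) (hFT : IsRepr T FT) :
    conj2 (fun q : X × Dd X => FS q + hatF FT (q.1 - p, q.2 - ps)) (ps, p)
      ≤ ((ps p : ℝ) : EReal) :=
  conj_sum_le_pairing_general S T p ps FS FT hFS hFT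
end
end

section
/- On X = ℝ, let S = ∂δ_{[0,∞)} and T = ∂δ_{{0}} with Fitzpatrick functions φ_S and φ_T. Then dom φ_S − dom φ̂_T = [0, ∞) × ℝ, and {0} × ℝ is not contained in the interior (0, ∞) × ℝ of this set; nevertheless S + T is surjective: R(S + T) = ℝ. -/
noncomputable section

open scoped Topology Pointwise

variable {X : Type*} [NormedAddCommGroup X] [NormedSpace ℝ X]

/-- The Fitzpatrick function of an operator `S : ℝ ⇉ ℝ` (dual identified with `ℝ`). -/
def fitzR (S : ℝ → Set ℝ) : ℝ × ℝ → EReal :=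
  fun p => ⨆ q : {q : ℝ × ℝ // q.2 ∈ S q.1},
    ((q.1.2 * p.1 + p.2 * q.1.1 - q.1.2 * q.1.1 : ℝ) : EReal)

/-- Conjugate of a function on `ℝ × ℝ`, evaluated on `ℝ × ℝ` with flipped pairing. -/
def conj2R (F : ℝ × ℝ → EReal) : ℝ × ℝ → EReal :=
  fun p => ⨆ q : ℝ × ℝ, ((p.1 * q.1 + q.2 * p.2 : ℝ) : EReal) - F q

/-!
The Fitzpatrick function of an operator on `ℝ` is a supremum of affine functions of `(x, x*)`,
one for each point of the graph, so it is finite exactly where these are bounded above. The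
graph of `S` contains the rays `{0} × (-∞, 0]` and `(0, ∞) × {0}`, which forces `x ≥ 0` and
`x* ≤ 0`; the graph of `T` contains the line `{0} × ℝ`, which forces `x = 0`. Hence
`dom φ_S − dom φ̂_T = [0, ∞) × ℝ`, while `0 ∈ S 0` and `T 0 = ℝ` make `S + T` surjective already
at the boundary point `0`.
-/

open Set

lemma EReal.iSup_coe_ne_top_iff {ι : Sort*} (f : ι → ℝ) :
    ⨆ i, (f i : EReal) ≠ ⊤ ↔ BddAbove (range f) := by
  refine ⟨fun h => ?_, fun ⟨M, hM⟩ => ?_⟩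
  · contrapose! h
    refine iSup_eq_top.2 fun b hb => ?_
    obtain ⟨c, hbc, -⟩ := EReal.lt_iff_exists_real_btwn.1 hb
    obtain ⟨-, ⟨i, rfl⟩, hci⟩ := not_bddAbove_iff.1 h c
    exact ⟨i, hbc.trans (EReal.coe_lt_coe_iff.2 hci)⟩
  · exact ne_top_of_le_ne_top (EReal.coe_ne_top M)
      (iSup_le fun i => EReal.coe_le_coe_iff.2 (hM (mem_range_self i)))

lemma nonpos_of_forall_pos_mul_le {a M : ℝ} (h : ∀ x : ℝ, 0 < x → x * a ≤ M) : a ≤ 0 := by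
  by_contra! ha
  have hx : 0 < (|M| + 1) / a := by positivity
  have := h _ hx
  rw [div_mul_cancel₀ _ ha.ne'] at this
  linarith [le_abs_self M]

lemma fitzR_ne_top_iff (S : ℝ → Set ℝ) (p : ℝ × ℝ) :
    fitzR S p ≠ ⊤ ↔ BddAbove (range fun q : {q : ℝ × ℝ // q.2 ∈ S q.1} =>
      q.1.2 * p.1 + p.2 * q.1.1 - q.1.2 * q.1.1) :=
  EReal.iSup_coe_ne_top_iff _

def normalConeIci (x : ℝ) : Set ℝ := if 0 < x then {0} else if x = 0 then Iic 0 else ∅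

def normalConeZero (x : ℝ) : Set ℝ := if x = 0 then univ else ∅

lemma mem_normalConeIci {x s : ℝ} : s ∈ normalConeIci x ↔ 0 < x ∧ s = 0 ∨ x = 0 ∧ s ≤ 0 := by
  unfold normalConeIci
  split_ifs with hpos hzero
  · simp [hpos, hpos.ne']
  · simp [hzero]
  · simp [hpos, hzero]

lemma mem_normalConeZero {x s : ℝ} : s ∈ normalConeZero x ↔ x = 0 := by
  unfold normalConeZero
  split_ifs <;> simp [*]

lemma edom_fitzR_normalConeIci : edom (fitzR normalConeIci) = Ici 0 ×ˢ Iic 0 := by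
  ext ⟨a, b⟩
  simp only [edom, mem_ofPred_eq, fitzR_ne_top_iff, mem_prod, mem_Ici, mem_Iic]
  constructor
  · rintro ⟨M, hM⟩
    have hray (x s : ℝ) (h : s ∈ normalConeIci x) : s * a + b * x - s * x ≤ M :=
      hM (mem_range_self (⟨(x, s), h⟩ : {q : ℝ × ℝ // q.2 ∈ normalConeIci q.1}))
    constructor
    · refine neg_nonpos.1 (nonpos_of_forall_pos_mul_le (M := M) fun x hx => ?_)
      have := hray 0 (-x) (mem_normalConeIci.2 (Or.inr ⟨rfl, by linarith⟩))
      linarith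
    · refine nonpos_of_forall_pos_mul_le (M := M) fun x hx => ?_
      have := hray x 0 (mem_normalConeIci.2 (Or.inl ⟨hx, rfl⟩))
      linarith
  · rintro ⟨ha, hb⟩
    refine ⟨0, forall_mem_range.2 fun ⟨⟨x, s⟩, h⟩ => ?_⟩
    rcases mem_normalConeIci.1 h with ⟨hx, rfl⟩ | ⟨rfl, hs⟩ <;> dsimp only <;> nlinarith

lemma edom_fitzR_normalConeZero_neg :
    edom (fun p : ℝ × ℝ => fitzR normalConeZero (p.1, -p.2)) = {0} ×ˢ univ := by
  ext ⟨a, b⟩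
  simp only [edom, mem_ofPred_eq, fitzR_ne_top_iff, mem_prod, mem_singleton_iff, mem_univ,
    and_true]
  constructor
  · rintro ⟨M, hM⟩
    have hline (t : ℝ) : t * a ≤ M := by
      have := hM (mem_range_self (⟨(0, t), mem_normalConeZero.2 rfl⟩ :
        {q : ℝ × ℝ // q.2 ∈ normalConeZero q.1}))
      simpa using this
    refine le_antisymm (nonpos_of_forall_pos_mul_le fun x _ => hline x)
      (neg_nonpos.1 (nonpos_of_forall_pos_mul_le (M := M) fun x _ => ?_))
    simpa using hline (-x)
  · rintro rfl
    refine ⟨0, forall_mem_range.2 fun ⟨⟨x, t⟩, h⟩ => ?_⟩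
    obtain rfl := mem_normalConeZero.1 h
    simp

lemma Ici_prod_Iic_sub_singleton_prod_univ :
    (Ici (0:ℝ) ×ˢ Iic (0:ℝ)) - (({0} : Set ℝ) ×ˢ univ) = Ici 0 ×ˢ univ := by
  rw [prod_sub_prod_comm, sub_singleton, sub_eq_add_neg, neg_univ, add_univ nonempty_Iic]
  simp

/-- for `S = ∂δ_{[0,∞)}`, `T = ∂δ_{{0}}` on `ℝ`,
`dom φ_S − dom φ̂_T = [0,∞) × ℝ`, whose interior `(0,∞) × ℝ` does not contain `{0} × ℝ`,
yet `S + T` is surjective. -/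
theorem example_interiority_fails_but_surjective
    (S T : ℝ → Set ℝ)
    (hS : ∀ x : ℝ, S x = if 0 < x then {0} else if x = 0 then Set.Iic (0 : ℝ) else ∅)
    (hT : ∀ x : ℝ, T x = if x = 0 then (Set.univ : Set ℝ) else ∅) :
    edom (fitzR S) - edom (fun p : ℝ × ℝ => fitzR T (p.1, -p.2))
      = Set.Ici (0 : ℝ) ×ˢ (Set.univ : Set ℝ) ∧
    interior (edom (fitzR S) - edom (fun p : ℝ × ℝ => fitzR T (p.1, -p.2)))
      = Set.Ioi (0 : ℝ) ×ˢ (Set.univ : Set ℝ) ∧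
    ¬ (({0} : Set ℝ) ×ˢ (Set.univ : Set ℝ) ⊆
        interior (edom (fitzR S) - edom (fun p : ℝ × ℝ => fitzR T (p.1, -p.2)))) ∧
    ∀ ps : ℝ, ∃ x : ℝ, ∃ s ∈ S x, ∃ t ∈ T x, s + t = ps := by
  obtain rfl : S = normalConeIci := funext hS
  obtain rfl : T = normalConeZero := funext hT
  rw [edom_fitzR_normalConeIci, edom_fitzR_normalConeZero_neg,
    Ici_prod_Iic_sub_singleton_prod_univ, interior_prod_eq, interior_Ici, interior_univ]
  refine ⟨rfl, rfl, fun h => ?_, fun ps => ⟨0, 0, ?_, ps, ?_, zero_add ps⟩⟩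
  · exact lt_irrefl (0 : ℝ) (h (mk_mem_prod rfl (mem_univ (0 : ℝ)))).1
  · exact mem_normalConeIci.2 (Or.inr ⟨rfl, le_rfl⟩)
  · exact mem_normalConeZero.2 rfl
end
end

section
/- Let X be a reflexive Banach space, S : X ⇉ X* maximal monotone, and J the duality map Jx = ∂(½‖x‖²)(x) = {x* : ‖x‖² = ‖x*‖² = ⟨x*, x⟩}. Then for every p ∈ X the operator x ↦ S(p + x) + J(x) is surjective; in particular (p = 0), S + J is surjective (Rockafellar's surjectivity theorem). -/
/-!
Replacing `S` by `x ↦ S (p + x) - ps` reduces everything to `0 ∈ S v + J v` for some `v`.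
The Fitzpatrick function `φ` of a maximal monotone `S` dominates the duality pairing, which in
turn dominates `-(‖x‖² + ‖x*‖²)/2`. Separating the epigraph of `φ` from the strict hypograph of
this concave function, and identifying `X**` with `X`, gives an affine function
`(x, x*) ↦ ⟨a, x⟩ + ⟨x*, v⟩ + e` squeezed between the two. The conjugate of `½‖·‖²` turns the
lower bound into `(‖v‖² + ‖a‖²)/2 ≤ e`; the upper bound on the graph then makes `(v, a)`
monotonically related to `S`, so `a ∈ S v` by maximality, and forces
`⟨a, v⟩ = -(‖v‖² + ‖a‖²)/2`, i.e. `-a ∈ J v`.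
-/

noncomputable section

open scoped Topology Pointwise

variable {X : Type*} [NormedAddCommGroup X] [NormedSpace ℝ X]

/-- The duality map `J x = ∂(½‖x‖²)(x) = {x* : ‖x‖² = ‖x*‖² = ⟨x*, x⟩}`. -/
def dualityMap (X : Type*) [NormedAddCommGroup X] [NormedSpace ℝ X] (x : X) : Set (Dd X) :=
  {xs | ‖x‖ ^ 2 = ‖xs‖ ^ 2 ∧ ‖x‖ ^ 2 = xs x}

section Separation

variable {E : Type*} [TopologicalSpace E] [AddCommGroup E] [Module ℝ E]
  [IsTopologicalAddGroup E] [ContinuousSMul ℝ E]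

theorem ConcaveOn.exists_affine_between {g : E → ℝ} (hgc : ConcaveOn ℝ Set.univ g)
    (hg : Continuous g) {A : Set (E × ℝ)} (hA : Convex ℝ A) (hAne : A.Nonempty)
    (hgA : ∀ p ∈ A, g p.1 ≤ p.2) :
    ∃ (L : StrongDual ℝ E) (e : ℝ), (∀ z, g z ≤ L z + e) ∧ ∀ p ∈ A, L p.1 + e ≤ p.2 := by
  set B : Set (E × ℝ) := {p | p.2 < g p.1}
  have hBconv : Convex ℝ B := by simpa using hgc.convex_strict_hypograph
  have hBopen : IsOpen B := isOpen_lt continuous_snd (hg.comp continuous_fst)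
  have hdisj : Disjoint B A :=
    Set.disjoint_left.2 fun p hpB hpA => (hgA p hpA).not_gt hpB
  obtain ⟨f, c, hfB, hfA⟩ := geometric_hahn_banach_open hBconv hBopen hA hdisj
  set L₀ : StrongDual ℝ E := f.comp (ContinuousLinearMap.inl ℝ E ℝ)
  set σ : ℝ := f (0, 1)
  have hf : ∀ z t, f (z, t) = L₀ z + t * σ := fun z t => by
    have : (z, t) = (z, 0) + t • ((0 : E), (1 : ℝ)) := by simp
    rw [this, map_add, map_smul, smul_eq_mul]
    rfl
  have hB : ∀ z t, t < g z → L₀ z + t * σ < c := fun z t ht => hf z t ▸ hfB (z, t) ht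
  -- compare `f` at a point of `A` and at the point of `B` just below it
  have hσ : 0 < σ := by
    obtain ⟨a, ha⟩ := hAne
    have h₁ := hB a.1 (g a.1 - 1) (by linarith)
    have h₂ := hfA a ha
    rw [hf] at h₂
    nlinarith [hgA a ha]
  refine ⟨-(σ⁻¹ • L₀), c / σ, fun z => ?_, fun p hp => ?_⟩
  · by_contra! h
    have := hB z _ h
    simp only [neg_apply, smul_apply, smul_eq_mul] at this
    field_simp at this
    linarith
  · have := hfA p hp
    rw [hf] at this
    simp only [neg_apply, smul_apply, smul_eq_mul]
    rw [← mul_le_mul_iff_left₀ hσ]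
    field_simp
    linarith

end Separation

theorem convexOn_univ_sq_norm {F : Type*} [SeminormedAddCommGroup F] [NormedSpace ℝ F] :
    ConvexOn ℝ Set.univ fun y : F => ‖y‖ ^ 2 :=
  convexOn_univ_norm.pow (fun _ _ => norm_nonneg _) 2

theorem StrongDual.abs_apply_le (xs : Dd X) (x : X) : |xs x| ≤ (‖x‖ ^ 2 + ‖xs‖ ^ 2) / 2 :=
  (xs.le_opNorm x).trans (by nlinarith [sq_nonneg (‖x‖ - ‖xs‖)])

theorem StrongDual.sq_norm_div_two_le (f : Dd X) {d : ℝ} (h : ∀ x, f x - ‖x‖ ^ 2 / 2 ≤ d) :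
    ‖f‖ ^ 2 / 2 ≤ d := by
  have hd : 0 ≤ d := by simpa using h 0
  have hsq : ∀ x, f x ^ 2 ≤ 2 * d * ‖x‖ ^ 2 := fun x => by
    have := discrim_le_zero (a := ‖x‖ ^ 2 / 2) (b := -f x) (c := d) fun t => by
      have := h (t • x)
      rw [map_smul, smul_eq_mul, norm_smul, Real.norm_eq_abs, mul_pow, sq_abs] at this
      linarith
    rw [discrim] at this
    linarith
  have hnorm : ‖f‖ ≤ √(2 * d) := f.opNorm_le_bound (Real.sqrt_nonneg _) fun x => by
    rw [Real.norm_eq_abs, ← Real.sqrt_sq (norm_nonneg x), ← Real.sqrt_mul (by positivity)]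
    exact Real.abs_le_sqrt (hsq x)
  have := pow_le_pow_left₀ (norm_nonneg f) hnorm 2
  rw [Real.sq_sqrt (by positivity)] at this
  linarith

theorem mem_dualityMap_of_le_apply {x : X} {xs : Dd X} (h : (‖x‖ ^ 2 + ‖xs‖ ^ 2) / 2 ≤ xs x) :
    xs ∈ dualityMap X x := by
  have hle : xs x ≤ ‖xs‖ * ‖x‖ := (le_abs_self _).trans (xs.le_opNorm x)
  have hsq : (‖x‖ - ‖xs‖) ^ 2 = 0 := le_antisymm (by nlinarith) (sq_nonneg _)
  have heq : ‖x‖ = ‖xs‖ := sub_eq_zero.1 (pow_eq_zero_iff two_ne_zero |>.1 hsq)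
  refine ⟨by rw [heq], ?_⟩
  rw [heq] at h hle ⊢
  linarith

theorem fitz_le_coe_iff {T : X → Set (Dd X)} {p : X × Dd X} {t : ℝ} :
    fitz T p ≤ t ↔ ∀ u us, us ∈ T u → us p.1 + p.2 u - us u ≤ t := by
  simp only [fitz, iSup_le_iff, EReal.coe_le_coe_iff, Subtype.forall, Prod.forall]

theorem IsMonotoneOp.fitz_le_apply {T : X → Set (Dd X)} (hT : IsMonotoneOp T) {u : X}
    {us : Dd X} (hus : us ∈ T u) : fitz T (u, us) ≤ (us u : ℝ) :=
  fitz_le_coe_iff.2 fun v vs hvs => by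
    have := hT hvs hus
    simp only [sub_apply, map_sub] at this
    linarith

theorem IsMaxMonotone.apply_le_fitz {T : X → Set (Dd X)} (hT : IsMaxMonotone T) (x : X)
    (xs : Dd X) : (xs x : EReal) ≤ fitz T (x, xs) := by
  by_contra! h
  have hlt : ∀ u us, us ∈ T u → us x + xs u - us u < xs x := fun u us hus =>
    EReal.coe_lt_coe_iff.1 <| (le_iSup (fun q : {q : X × Dd X // q.2 ∈ T q.1} =>
      ((q.1.2 x + xs q.1.1 - q.1.2 q.1.1 : ℝ) : EReal)) ⟨(u, us), hus⟩).trans_lt h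
  have hx : xs ∈ T x := hT.2 x xs fun u us hus => by
    have := hlt u us hus
    simp only [sub_apply, map_sub]
    linarith
  linarith [hlt x xs hx]

theorem convex_epigraph_fitz (T : X → Set (Dd X)) :
    Convex ℝ {p : (X × Dd X) × ℝ | fitz T p.1 ≤ p.2} := by
  intro p hp q hq a b ha hb hab
  simp only [Set.mem_ofPred_eq, fitz_le_coe_iff] at hp hq ⊢
  intro u us hus
  have e : us (a • p.1.1 + b • q.1.1) + (a • p.1.2 + b • q.1.2) u - us u
      = a * (us p.1.1 + p.1.2 u - us u) + b * (us q.1.1 + q.1.2 u - us u) := by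
    simp only [map_add, map_smul, add_apply, smul_apply, smul_eq_mul]
    linear_combination (us u) * hab
  simp only [Prod.fst_add, Prod.snd_add, Prod.smul_fst, Prod.smul_snd, smul_eq_mul, e]
  nlinarith [mul_le_mul_of_nonneg_left (hp u us hus) ha,
    mul_le_mul_of_nonneg_left (hq u us hus) hb]

theorem IsMaxMonotone.exists_mem {T : X → Set (Dd X)} (hT : IsMaxMonotone T) :
    ∃ u us, us ∈ T u := by
  by_contra! h
  exact h 0 0 (hT.2 0 0 fun y ys hy => absurd hy (h y ys))

theorem IsMaxMonotone.exists_affine_sandwich (hX : Reflexive' X) {T : X → Set (Dd X)}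
    (hT : IsMaxMonotone T) :
    ∃ (v : X) (a : Dd X) (e : ℝ),
      (∀ (x : X) (xs : Dd X), -((‖x‖ ^ 2 + ‖xs‖ ^ 2) / 2) ≤ a x + xs v + e) ∧
      ∀ u us, us ∈ T u → a u + us v + e ≤ us u := by
  have hconc : ConcaveOn ℝ Set.univ fun z : X × Dd X => -((‖z.1‖ ^ 2 + ‖z.2‖ ^ 2) / 2) := by
    have hsum := (convexOn_univ_sq_norm.comp_linearMap (LinearMap.fst ℝ X (Dd X))).add
      (convexOn_univ_sq_norm.comp_linearMap (LinearMap.snd ℝ X (Dd X)))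
    refine ((hsum.smul (c := (1 / 2 : ℝ)) (by norm_num)).neg).congr fun z _ => ?_
    simp only [Pi.neg_apply, Pi.add_apply, Function.comp_apply, LinearMap.fst_apply,
      LinearMap.snd_apply, smul_eq_mul]
    ring
  obtain ⟨u₀, us₀, hus₀⟩ := hT.exists_mem
  have hcont : Continuous fun z : X × Dd X => -((‖z.1‖ ^ 2 + ‖z.2‖ ^ 2) / 2) := by
    fun_prop
  have hbelow : ∀ p ∈ {p : (X × Dd X) × ℝ | fitz T p.1 ≤ p.2},
      -((‖p.1.1‖ ^ 2 + ‖p.1.2‖ ^ 2) / 2) ≤ p.2 := fun p hp =>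
    (neg_le_of_abs_le (p.1.2.abs_apply_le p.1.1)).trans
      (EReal.coe_le_coe_iff.1 ((hT.apply_le_fitz p.1.1 p.1.2).trans hp))
  obtain ⟨L, e, hLq, hLA⟩ := hconc.exists_affine_between hcont (convex_epigraph_fitz T)
    ⟨((u₀, us₀), us₀ u₀), hT.1.fitz_le_apply hus₀⟩ hbelow
  obtain ⟨v, hv⟩ := hX (L.comp (ContinuousLinearMap.inr ℝ X (Dd X)))
  set a : Dd X := L.comp (ContinuousLinearMap.inl ℝ X (Dd X))
  have hL : ∀ x xs, L (x, xs) = a x + xs v := fun x xs => by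
    have hsplit : (x, xs) = (x, 0) + (0, xs) := by simp
    rw [← NormedSpace.dual_def ℝ X v xs, hv, hsplit, map_add]
    rfl
  refine ⟨v, a, e, fun x xs => ?_, fun u us hus => ?_⟩
  · rw [← hL]
    exact hLq (x, xs)
  · rw [← hL]
    exact hLA ((u, us), us u) (hT.1.fitz_le_apply hus)

theorem IsMaxMonotone.exists_neg_mem_dualityMap (hX : Reflexive' X) {T : X → Set (Dd X)}
    (hT : IsMaxMonotone T) : ∃ x, ∃ s ∈ T x, -s ∈ dualityMap X x := by
  obtain ⟨v, a, e, hq, hgraph⟩ := hT.exists_affine_sandwich hX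
  have ha : ∀ xs : Dd X, ‖a‖ ^ 2 / 2 ≤ e + xs v + ‖xs‖ ^ 2 / 2 := fun xs => by
    simpa only [norm_neg] using (-a).sq_norm_div_two_le fun x => by
      simp only [neg_apply]
      linarith [hq x xs]
  have hv : ‖v‖ ^ 2 / 2 ≤ e - ‖a‖ ^ 2 / 2 := by
    have := (-NormedSpace.inclusionInDoubleDual ℝ X v).sq_norm_div_two_le
      (d := e - ‖a‖ ^ 2 / 2) fun xs => by
        simp only [neg_apply, NormedSpace.dual_def]
        linarith [ha xs]
    have hnorm : ‖NormedSpace.inclusionInDoubleDual ℝ X v‖ = ‖v‖ :=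
      (NormedSpace.inclusionInDoubleDualLi ℝ).norm_map v
    rwa [norm_neg, hnorm] at this
  have hlow := neg_le_of_abs_le (a.abs_apply_le v)
  have hav : a ∈ T v := hT.2 v a fun u us hus => by
    have := hgraph u us hus
    simp only [sub_apply, map_sub]
    linarith
  refine ⟨v, a, hav, mem_dualityMap_of_le_apply ?_⟩
  have := hgraph v a hav
  simp only [neg_apply, norm_neg]
  linarith

theorem IsMaxMonotone.shift {S : X → Set (Dd X)} (hS : IsMaxMonotone S) (p : X) (ps : Dd X) :
    IsMaxMonotone fun x => {xs | xs + ps ∈ S (p + x)} := by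
  refine ⟨fun x y xs ys hxs hys => by simpa using hS.1 hxs hys, fun x xs h => ?_⟩
  refine hS.2 _ _ fun y ys hys => ?_
  simpa [sub_sub_eq_add_sub, add_comm] using h (y - p) (ys - ps) (by simpa using hys)

theorem rockafellar_surjectivity_general (hX : Reflexive' X)
    (S : X → Set (Dd X)) (hS : IsMaxMonotone S) :
    (∀ (p : X) (ps : Dd X), ∃ x : X, ∃ s ∈ S (p + x), ∃ j ∈ dualityMap X x, s + j = ps) ∧
    (∀ ps : Dd X, ∃ x : X, ∃ s ∈ S x, ∃ j ∈ dualityMap X x, s + j = ps) := by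
  have shifted (p : X) (ps : Dd X) :
      ∃ x : X, ∃ s ∈ S (p + x), ∃ j ∈ dualityMap X x, s + j = ps := by
    obtain ⟨x, s, hs, hj⟩ := (hS.shift p ps).exists_neg_mem_dualityMap hX
    exact ⟨x, s + ps, hs, -s, hj, by abel⟩
  exact ⟨shifted, fun ps => by simpa using shifted 0 ps⟩

/-- for any maximal monotone `S` on a reflexive Banach space and any `p`,
`S(p + ·) + J(·)` is surjective; in particular `S + J` is surjective (Rockafellar). -/
theorem rockafellar_surjectivity [CompleteSpace X] (hX : Reflexive' X)
    (S : X → Set (Dd X)) (hS : IsMaxMonotone S) :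
    (∀ (p : X) (ps : Dd X), ∃ x : X, ∃ s ∈ S (p + x), ∃ j ∈ dualityMap X x, s + j = ps) ∧
    (∀ ps : Dd X, ∃ x : X, ∃ s ∈ S x, ∃ j ∈ dualityMap X x, s + j = ps) :=
  rockafellar_surjectivity_general hX S hS
end
end
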